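/- Let l, m, n, l₁, m₁, n₁ be real numbers and set a₀ = n² − (m₁+n₁)², a₁ = m² − 2ln − l₁², a₂ = l² − 2m. Assume a₀ > 0, a₁ < 0, and 2a₂³ − 9a₁a₂ + 27a₀ > 2(a₂² − 3a₁)^{3/2}. Then for every τ ≥ 0 and every real ν, (iν)³ + l·(iν)² + m·(iν) + n + (l₁·(iν) + m₁ + n₁)·exp(−iντ) ≠ 0; that is, the characteristic equation has no purely imaginary roots for any delay τ ≥ 0. -/

import Mathlib

/-!
On the imaginary axis `|e^{-iντ}| = 1`, so a root `λ = iν` forces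
`|(iν)³ + l(iν)² + m(iν) + n| = |l₁(iν) + m₁ + n₁|`. Squaring, this says that `s = ν²` is a
root of `s³ + a₂s² + a₁s + a₀`. The hypotheses say exactly that this cubic is positive at its
local minimum `s₊ = (√(a₂² - 3a₁) - a₂)/3`, which is the minimum over `s ≥ 0` since `a₁ < 0`.
-/

open Complex

lemma rpow_three_halves_eq_sqrt_pow_three {x : ℝ} (hx : 0 ≤ x) :
    x ^ ((3 : ℝ) / 2) = √x ^ 3 := by
  rw [Real.rpow_div_two_eq_sqrt _ hx]
  exact_mod_cast Real.rpow_natCast (√x) 3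

lemma cubic_pos_of_nonneg {a₀ a₁ a₂ s : ℝ} (h1 : a₁ < 0)
    (h2 : 2 * a₂ ^ 3 - 9 * a₁ * a₂ + 27 * a₀ > 2 * (a₂ ^ 2 - 3 * a₁) ^ ((3 : ℝ) / 2))
    (hs : 0 ≤ s) : 0 < s ^ 3 + a₂ * s ^ 2 + a₁ * s + a₀ := by
  have hΔ : 0 ≤ a₂ ^ 2 - 3 * a₁ := by nlinarith [sq_nonneg a₂]
  set r := √(a₂ ^ 2 - 3 * a₁)
  have hr2 : r ^ 2 = a₂ ^ 2 - 3 * a₁ := Real.sq_sqrt hΔ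
  rw [rpow_three_halves_eq_sqrt_pow_three hΔ] at h2
  have hr : 0 ≤ r := Real.sqrt_nonneg _
  have hpos : 0 ≤ a₂ + 2 * r := by nlinarith
  -- the cubic minus its value at the critical point `(r - a₂)/3` has a double root there
  have hfactor : s ^ 3 + a₂ * s ^ 2 + a₁ * s + a₀
      = (2 * a₂ ^ 3 - 9 * a₁ * a₂ + 27 * a₀ - 2 * r ^ 3) / 27
        + (s - (r - a₂) / 3) ^ 2 * (s + (a₂ + 2 * r) / 3) := by
    linear_combination (s / 3 + a₂ / 9) * hr2
  have hrest : 0 ≤ (s - (r - a₂) / 3) ^ 2 * (s + (a₂ + 2 * r) / 3) :=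
    mul_nonneg (sq_nonneg _) (by linarith)
  rw [hfactor]
  linarith

lemma norm_eq_of_add_mul_eq_zero {z w u : ℂ} (hu : ‖u‖ = 1) (h : z + w * u = 0) :
    ‖z‖ = ‖w‖ := by
  rw [eq_neg_of_add_eq_zero_left h, norm_neg, norm_mul, hu, mul_one]

lemma norm_exp_neg_I_mul (x : ℝ) : ‖exp (-(I * x))‖ = 1 := by
  simpa using norm_exp_I_mul_ofReal (-x)

lemma normSq_cubic_I_mul (l m n ν : ℝ) :
    normSq ((I * ν) ^ 3 + l * (I * ν) ^ 2 + m * (I * ν) + n)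
      = (n - l * ν ^ 2) ^ 2 + (m * ν - ν ^ 3) ^ 2 := by
  rw [← normSq_add_mul_I]
  congr 1
  push_cast
  linear_combination (ν ^ 3 * I + l * ν ^ 2) * I_sq

lemma normSq_linear_I_mul (l₁ c ν : ℝ) :
    normSq (l₁ * (I * ν) + c) = c ^ 2 + (l₁ * ν) ^ 2 := by
  rw [← normSq_add_mul_I]
  congr 1
  push_cast
  ring

theorem no_imaginary_roots_general (l m n l₁ m₁ n₁ : ℝ)
    (h1 : m ^ 2 - 2 * l * n - l₁ ^ 2 < 0)
    (h2 : 2 * (l ^ 2 - 2 * m) ^ 3 - 9 * (m ^ 2 - 2 * l * n - l₁ ^ 2) * (l ^ 2 - 2 * m)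
          + 27 * (n ^ 2 - (m₁ + n₁) ^ 2)
        > 2 * ((l ^ 2 - 2 * m) ^ 2 - 3 * (m ^ 2 - 2 * l * n - l₁ ^ 2)) ^ ((3 : ℝ) / 2)) :
    ∀ τ : ℝ, 0 ≤ τ → ∀ ν : ℝ,
      (I * ν) ^ 3 + (l : ℂ) * (I * ν) ^ 2 + (m : ℂ) * (I * ν) + (n : ℂ)
        + ((l₁ : ℂ) * (I * ν) + (m₁ : ℂ) + (n₁ : ℂ)) * Complex.exp (-(I * ν * τ)) ≠ 0 := by
  intro τ _ ν h
  rw [add_assoc _ (m₁ : ℂ), ← ofReal_add, mul_assoc I, ← ofReal_mul] at h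
  have hnorm := norm_eq_of_add_mul_eq_zero (norm_exp_neg_I_mul (ν * τ)) h
  have hnormSq := congrArg (· ^ 2) hnorm
  simp only [Complex.sq_norm, normSq_cubic_I_mul, normSq_linear_I_mul] at hnormSq
  have hroot : (ν ^ 2) ^ 3 + (l ^ 2 - 2 * m) * (ν ^ 2) ^ 2
      + (m ^ 2 - 2 * l * n - l₁ ^ 2) * ν ^ 2 + (n ^ 2 - (m₁ + n₁) ^ 2) = 0 := by
    linear_combination hnormSq
  exact (cubic_pos_of_nonneg h1 h2 (sq_nonneg ν)).ne' hroot

/-- Under the conditions of Theorem 3.3(ii), the delayed characteristic equation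
`λ³ + lλ² + mλ + n + (l₁λ + m₁ + n₁) e^{-λτ} = 0` has no purely imaginary roots
for any delay `τ ≥ 0`. -/
theorem no_imaginary_roots (l m n l₁ m₁ n₁ : ℝ)
    (h0 : 0 < n ^ 2 - (m₁ + n₁) ^ 2)
    (h1 : m ^ 2 - 2 * l * n - l₁ ^ 2 < 0)
    (h2 : 2 * (l ^ 2 - 2 * m) ^ 3 - 9 * (m ^ 2 - 2 * l * n - l₁ ^ 2) * (l ^ 2 - 2 * m)
          + 27 * (n ^ 2 - (m₁ + n₁) ^ 2)
        > 2 * ((l ^ 2 - 2 * m) ^ 2 - 3 * (m ^ 2 - 2 * l * n - l₁ ^ 2)) ^ ((3 : ℝ) / 2)) :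
    ∀ τ : ℝ, 0 ≤ τ → ∀ ν : ℝ,
      (I * ν) ^ 3 + (l : ℂ) * (I * ν) ^ 2 + (m : ℂ) * (I * ν) + (n : ℂ)
        + ((l₁ : ℂ) * (I * ν) + (m₁ : ℂ) + (n₁ : ℂ)) * Complex.exp (-(I * ν * τ)) ≠ 0 :=
  no_imaginary_roots_general l m n l₁ m₁ n₁ h1 h2
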